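/- Let ψ: R_2 → Z_4² be the Gray map ψ(a+ωb) = (b, a+b), extended coordinatewise to R_2^n → Z_4^{2n}. For any linear code C over R_2 = Z_4[ω]/(ω²−2), ψ(C^⊥) = ψ(C)^⊥, where duals are taken with respect to the standard inner products over R_2 and Z_4 respectively. -/

import Mathlib

open Polynomial

/-- The ring `Z₄[ω]` with `ω² = a + bω`, i.e. `Z₄[X]/(X² − (a + bX))`. -/
abbrev Rring (a b : ZMod 4) := AdjoinRoot ((X : (ZMod 4)[X]) ^ 2 - (C a + C b * X))

/-- The element `ω` of `Rring a b`. -/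
noncomputable abbrev w (a b : ZMod 4) : Rring a b := AdjoinRoot.root _

lemma pmonic (a b : ZMod 4) : ((X : (ZMod 4)[X]) ^ 2 - (C a + C b * X)).Monic := by
  monicity!

/-- The Gray map `ψ : R_θ → Z₄²`, `ψ(a + ωb) = (b, a + b)`, computed from the
canonical representative of degree `< 2`. -/
noncomputable def psi (a b : ZMod 4) (z : Rring a b) : ZMod 4 × ZMod 4 :=
  ((AdjoinRoot.modByMonicHom (pmonic a b) z).coeff 1,
    (AdjoinRoot.modByMonicHom (pmonic a b) z).coeff 0 +
      (AdjoinRoot.modByMonicHom (pmonic a b) z).coeff 1)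

/-- The Gray map extended coordinatewise to words. -/
noncomputable def Psi (a b : ZMod 4) (n : ℕ) (c : Fin n → Rring a b) :
    Fin n → ZMod 4 × ZMod 4 :=
  fun i => psi a b (c i)

/-- The dual of a set of words over `R_θ` w.r.t. the standard inner product. -/
def dualR (a b : ZMod 4) (n : ℕ) (S : Set (Fin n → Rring a b)) :
    Set (Fin n → Rring a b) :=
  {v | ∀ u ∈ S, ∑ i : Fin n, v i * u i = 0}

/-- The dual of a set of words over `Z₄²ⁿ` w.r.t. the standard inner product. -/
def dualZ (n : ℕ) (S : Set (Fin n → ZMod 4 × ZMod 4)) :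
    Set (Fin n → ZMod 4 × ZMod 4) :=
  {v | ∀ u ∈ S, ∑ i : Fin n, ((v i).1 * (u i).1 + (v i).2 * (u i).2) = 0}

/-!
Write elements of `Z₄[ω]/(ω² − a − bω)` as `p + qω`. When `a + b = 2`, the Gray map turns
the standard inner product into `ψ(x) · ψ(y) = τ(xy)`, where `τ(p + qω) = p + q` (`grayTrace`)
is additive; hence `ψ(C^⊥) ⊆ ψ(C)^⊥`. Conversely `ψ` is bijective, and `τ(x) = τ(ωx) = 0` forces `x = 0`
(as `ωx = aq + (p + bq)ω`), so since `C` is closed under multiplication by `ω`, every word of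
`ψ(C)^⊥` is the image of a word of `C^⊥`.
-/

instance : Nontrivial (ZMod 4) := ZMod.nontrivial_iff.mpr (by decide)

namespace Rring

variable {a b : ZMod 4}

noncomputable def ofCoeffs (p q : ZMod 4) : Rring a b :=
  AdjoinRoot.mk _ (C p + C q * X)

lemma degree_modulus : ((X : (ZMod 4)[X]) ^ 2 - (C a + C b * X)).degree = 2 := by
  compute_degree!

lemma modByMonicHom_ofCoeffs (p q : ZMod 4) :
    AdjoinRoot.modByMonicHom (pmonic a b) (ofCoeffs p q) = C p + C q * X := by
  rw [ofCoeffs, AdjoinRoot.modByMonicHom_mk, modByMonic_eq_self_iff (pmonic a b),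
    degree_modulus]
  compute_degree!

lemma exists_ofCoeffs_eq (z : Rring a b) : ∃ p q : ZMod 4, ofCoeffs p q = z := by
  induction z using AdjoinRoot.induction_on with
  | ih P =>
  have hdeg : (P %ₘ (X ^ 2 - (C a + C b * X))).degree ≤ 1 := by
    have := degree_modByMonic_lt P (pmonic a b)
    rw [degree_modulus] at this
    exact Order.le_of_lt_succ this
  refine ⟨(P %ₘ (X ^ 2 - (C a + C b * X))).coeff 0,
    (P %ₘ (X ^ 2 - (C a + C b * X))).coeff 1, ?_⟩
  conv_rhs => rw [← AdjoinRoot.mk_leftInverse (pmonic a b) (AdjoinRoot.mk _ P),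
    AdjoinRoot.modByMonicHom_mk, eq_X_add_C_of_degree_le_one hdeg]
  rw [ofCoeffs]
  congr 1
  ring

lemma ofCoeffs_zero : (ofCoeffs 0 0 : Rring a b) = 0 := by
  simp [ofCoeffs]

lemma ofCoeffs_mul (p q p' q' : ZMod 4) :
    (ofCoeffs p q * ofCoeffs p' q' : Rring a b) =
      ofCoeffs (p * p' + a * (q * q')) (p * q' + q * p' + b * (q * q')) := by
  rw [ofCoeffs, ofCoeffs, ofCoeffs, ← map_mul, AdjoinRoot.mk_eq_mk]
  refine ⟨C (q * q'), ?_⟩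
  simp only [map_add, map_mul]
  ring

lemma w_eq_ofCoeffs : w a b = ofCoeffs 0 1 := by
  simp [ofCoeffs]

@[simp]
lemma psi_ofCoeffs (p q : ZMod 4) : psi a b (ofCoeffs p q) = (q, p + q) := by
  simp [psi, modByMonicHom_ofCoeffs]

lemma psi_bijective (a b : ZMod 4) : Function.Bijective (psi a b) := by
  refine Function.bijective_iff_has_inverse.mpr
    ⟨fun y => ofCoeffs (y.2 - y.1) y.1, fun z => ?_, fun y => by simp⟩
  obtain ⟨p, q, rfl⟩ := exists_ofCoeffs_eq z
  simp

lemma Psi_bijective (a b : ZMod 4) (n : ℕ) : Function.Bijective (Psi a b n) :=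
  Function.Bijective.piMap fun _ => psi_bijective a b

noncomputable def grayTrace : Rring a b →ₗ[ZMod 4] ZMod 4 :=
  (lcoeff (ZMod 4) 0 + lcoeff (ZMod 4) 1) ∘ₗ AdjoinRoot.modByMonicHom (pmonic a b)

@[simp]
lemma grayTrace_ofCoeffs (p q : ZMod 4) : grayTrace (ofCoeffs p q : Rring a b) = p + q := by
  simp [grayTrace, modByMonicHom_ofCoeffs]

lemma psi_mul_psi (hab : a + b = 2) (z z' : Rring a b) :
    (psi a b z).1 * (psi a b z').1 + (psi a b z).2 * (psi a b z').2 = grayTrace (z * z') := by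
  obtain ⟨p, q, rfl⟩ := exists_ofCoeffs_eq z
  obtain ⟨p', q', rfl⟩ := exists_ofCoeffs_eq z'
  rw [ofCoeffs_mul, psi_ofCoeffs, psi_ofCoeffs, grayTrace_ofCoeffs]
  linear_combination (-(q * q')) * hab

lemma sum_Psi_mul_Psi (hab : a + b = 2) {n : ℕ} (v u : Fin n → Rring a b) :
    ∑ i, ((Psi a b n v i).1 * (Psi a b n u i).1 + (Psi a b n v i).2 * (Psi a b n u i).2) =
      grayTrace (∑ i, v i * u i) := by
  simp only [Psi, psi_mul_psi hab, map_sum]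

lemma eq_zero_of_grayTrace_eq_zero (hab : a + b = 2) {x : Rring a b} (h : grayTrace x = 0)
    (hw : grayTrace (w a b * x) = 0) : x = 0 := by
  obtain ⟨s, t, rfl⟩ := exists_ofCoeffs_eq x
  rw [w_eq_ofCoeffs, ofCoeffs_mul, grayTrace_ofCoeffs] at hw
  rw [grayTrace_ofCoeffs] at h
  have ht : t = 0 := by linear_combination hw - h - t * hab
  have hs : s = 0 := by linear_combination h - ht
  rw [hs, ht, ofCoeffs_zero]

theorem image_Psi_dualR (hab : a + b = 2) (n : ℕ)
    (L : Submodule (Rring a b) (Fin n → Rring a b)) :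
    Psi a b n '' dualR a b n L = dualZ n (Psi a b n '' L) := by
  ext y
  obtain ⟨v, rfl⟩ := (Psi_bijective a b n).2 y
  rw [(Psi_bijective a b n).1.mem_set_image]
  simp only [dualR, dualZ, Set.mem_ofPred_eq, Set.forall_mem_image, sum_Psi_mul_Psi hab,
    SetLike.mem_coe]
  refine ⟨fun h u hu => by rw [h u hu, map_zero], fun h u hu => ?_⟩
  refine eq_zero_of_grayTrace_eq_zero hab (h hu) ?_
  have hsmul : ∑ i, v i * (w a b • u) i = w a b * ∑ i, v i * u i := by
    simp [Finset.mul_sum, mul_left_comm]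
  rw [← hsmul]
  exact h (L.smul_mem _ hu)

end Rring

theorem stmt12 (n : ℕ) (Ccode : Submodule (Rring 2 0) (Fin n → Rring 2 0)) :
    Psi 2 0 n '' dualR 2 0 n (Ccode : Set (Fin n → Rring 2 0)) =
      dualZ n (Psi 2 0 n '' (Ccode : Set (Fin n → Rring 2 0))) :=
  Rring.image_Psi_dualR (by decide) n Ccode
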